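/- Let N ≥ 2 and let u be a C² function on an open set U ⊆ ℝ^N that is N-harmonic, i.e., div(|∇u|^{N-2}∇u) = 0 on U (assume ∇u ≠ 0 on U). Then the vector field X(x) = N ⟨x, ∇u(x)⟩ |∇u(x)|^{N-2} ∇u(x) − |∇u(x)|^N x is divergence-free on U. -/

import Mathlib

open Real
open scoped RealInnerProductSpace

/-- Divergence of a vector field on Euclidean space. -/
noncomputable def ediv {N : ℕ} (X : EuclideanSpace ℝ (Fin N) → EuclideanSpace ℝ (Fin N))
    (x : EuclideanSpace ℝ (Fin N)) : ℝ :=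
  ∑ i, ⟪fderiv ℝ X x (EuclideanSpace.single i 1), EuclideanSpace.single i 1⟫

/-!
Write `g = ∇u`, `H = Dg`, `W = |g|^{N-2} g` and `p(y) = ⟨y, g(y)⟩`, so that `X = N p W - |g|^N id`.
By the product rule, N-harmonicity `div W = 0` and `div id = N`,
`div X = N ⟨∇p, W⟩ - ⟨∇|g|^N, x⟩ - N |g|^N`. Here `∇p = g + H x` and `∇|g|^N = N |g|^{N-2} H g`,
so everything cancels because the Hessian `H` is symmetric.
-/

open InnerProductSpace

theorem Real.rpow_eq_sq_rpow_half {a : ℝ} (ha : 0 ≤ a) (p : ℝ) : a ^ p = (a ^ 2) ^ (p / 2) := by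
  rw [← Real.rpow_natCast, ← Real.rpow_mul ha]
  ring_nf

section InnerProductSpace

variable {E F : Type*} [NormedAddCommGroup E] [InnerProductSpace ℝ E]
  [NormedAddCommGroup F] [InnerProductSpace ℝ F]

theorem HasFDerivAt.norm_rpow {f : E → F} {f' : E →L[ℝ] F} {x : E} (hf : HasFDerivAt f f' x)
    (hx : f x ≠ 0) (p : ℝ) :
    HasFDerivAt (fun y => ‖f y‖ ^ p) ((p * ‖f x‖ ^ (p - 2)) • (innerSL ℝ (f x)).comp f') x := by
  have hsq : ‖f x‖ ^ 2 ≠ 0 := by positivity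
  convert hf.norm_sq.rpow_const (p := p / 2) (Or.inl hsq) using 1
  · simp only [Real.rpow_eq_sq_rpow_half (norm_nonneg _) p]
  · rw [Real.rpow_eq_sq_rpow_half (norm_nonneg _) (p - 2), ← Nat.cast_smul_eq_nsmul ℝ, smul_smul]
    congr 1
    ring_nf

theorem ContDiffAt.exists_hasFDerivAt_gradient_symm [CompleteSpace E] {u : E → ℝ} {x : E}
    (hu : ContDiffAt ℝ 2 u x) :
    ∃ H : E →L[ℝ] E, HasFDerivAt (gradient u) H x ∧ ∀ v w, ⟪H v, w⟫ = ⟪v, H w⟫ := by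
  have hdu : DifferentiableAt ℝ (fderiv ℝ u) x :=
    (hu.fderiv_right (m := 1) (by norm_num)).differentiableAt (by norm_num)
  refine ⟨_, (toDual ℝ E).symm.hasFDerivAt.comp x hdu.hasFDerivAt, fun v w => ?_⟩
  rw [ContinuousLinearMap.comp_apply, ContinuousLinearMap.comp_apply, real_inner_comm _ v]
  exact toDual_symm_apply.trans <| (hu.isSymmSndFDerivAt (by simp) v w).trans toDual_symm_apply.symm

end InnerProductSpace

section Divergence

variable {N : ℕ}

theorem ediv_eq_trace (X : EuclideanSpace ℝ (Fin N) → EuclideanSpace ℝ (Fin N))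
    (x : EuclideanSpace ℝ (Fin N)) :
    ediv X x = LinearMap.trace ℝ (EuclideanSpace ℝ (Fin N)) (fderiv ℝ X x) := by
  rw [ediv, LinearMap.trace_eq_sum_inner _ (EuclideanSpace.basisFun (Fin N) ℝ)]
  simp [EuclideanSpace.basisFun_apply, real_inner_comm]

theorem ediv_id (x : EuclideanSpace ℝ (Fin N)) : ediv (fun y => y) x = N := by
  simp [ediv_eq_trace]

variable {X Y : EuclideanSpace ℝ (Fin N) → EuclideanSpace ℝ (Fin N)} {x : EuclideanSpace ℝ (Fin N)}

theorem ediv_sub (hX : DifferentiableAt ℝ X x) (hY : DifferentiableAt ℝ Y x) :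
    ediv (fun y => X y - Y y) x = ediv X x - ediv Y x := by
  simp only [ediv_eq_trace, fderiv_fun_sub hX hY, ContinuousLinearMap.toLinearMap_sub, map_sub]

theorem ediv_smul {f : EuclideanSpace ℝ (Fin N) → ℝ} (hf : DifferentiableAt ℝ f x)
    (hX : DifferentiableAt ℝ X x) :
    ediv (fun y => f y • X y) x = f x * ediv X x + fderiv ℝ f x (X x) := by
  simp [ediv_eq_trace, fderiv_fun_smul hf hX]

end Divergence

theorem ediv_inner_smul_sub_norm_rpow_smul_eq_zero {N : ℕ}
    {g : EuclideanSpace ℝ (Fin N) → EuclideanSpace ℝ (Fin N)}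
    {H : EuclideanSpace ℝ (Fin N) →L[ℝ] EuclideanSpace ℝ (Fin N)} {x : EuclideanSpace ℝ (Fin N)}
    (hg : HasFDerivAt g H x) (hH : ∀ v w, ⟪H v, w⟫ = ⟪v, H w⟫) (hx : g x ≠ 0)
    (hdiv : ediv (fun y => ‖g y‖ ^ ((N : ℝ) - 2) • g y) x = 0) :
    ediv (fun y => ((N : ℝ) * ⟪y, g y⟫ * ‖g y‖ ^ ((N : ℝ) - 2)) • g y - ‖g y‖ ^ (N : ℝ) • y) x
      = 0 := by
  have hnorm (p : ℝ) := hg.norm_rpow hx p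
  have hpair : HasFDerivAt (fun y => (N : ℝ) * ⟪y, g y⟫) _ x :=
    ((hasFDerivAt_id x).inner ℝ hg).const_mul (N : ℝ)
  have hW : DifferentiableAt ℝ (fun y => ‖g y‖ ^ ((N : ℝ) - 2) • g y) x :=
    (hnorm _).differentiableAt.fun_smul hg.differentiableAt
  have hpow : ‖g x‖ ^ (N : ℝ) = ‖g x‖ ^ ((N : ℝ) - 2) * ‖g x‖ ^ 2 := by
    rw [← Real.rpow_two, ← Real.rpow_add (norm_pos_iff.mpr hx), sub_add_cancel]
  have hX : (fun y => ((N : ℝ) * ⟪y, g y⟫ * ‖g y‖ ^ ((N : ℝ) - 2)) • g y - ‖g y‖ ^ (N : ℝ) • y) =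
      fun y => ((N : ℝ) * ⟪y, g y⟫) • (‖g y‖ ^ ((N : ℝ) - 2) • g y) - ‖g y‖ ^ (N : ℝ) • y :=
    funext fun y => by rw [smul_smul]
  rw [hX, ediv_sub (hpair.differentiableAt.fun_smul hW)
      ((hnorm N).differentiableAt.fun_smul differentiableAt_fun_id),
    ediv_smul hpair.differentiableAt hW,
    ediv_smul (X := fun y => y) (hnorm N).differentiableAt differentiableAt_fun_id,
    hdiv, ediv_id, hpair.fderiv, (hnorm N).fderiv]
  simp only [smul_apply, ContinuousLinearMap.comp_apply, ContinuousLinearMap.prod_apply,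
    fderivInnerCLM_apply, ContinuousLinearMap.id_apply, id, innerSL_apply_apply, map_smul,
    real_inner_self_eq_norm_sq, smul_eq_mul]
  rw [← hH, real_inner_comm (g x) (H x), hpow]
  ring

theorem stmt7_general {N : ℕ} (U : Set (EuclideanSpace ℝ (Fin N))) (hU : IsOpen U)
    (u : EuclideanSpace ℝ (Fin N) → ℝ) (hu : ContDiffOn ℝ 2 u U)
    (hgrad : ∀ x ∈ U, gradient u x ≠ 0)
    (hharm : ∀ x ∈ U,
      ediv (fun y => ‖gradient u y‖ ^ ((N : ℝ) - 2) • gradient u y) x = 0) :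
    ∀ x ∈ U,
      ediv (fun y =>
          ((N : ℝ) * ⟪y, gradient u y⟫ * ‖gradient u y‖ ^ ((N : ℝ) - 2)) • gradient u y -
            (‖gradient u y‖ ^ (N : ℝ)) • y) x = 0 := by
  intro x hx
  obtain ⟨H, hg, hH⟩ := (hu.contDiffAt (hU.mem_nhds hx)).exists_hasFDerivAt_gradient_symm
  exact ediv_inner_smul_sub_norm_rpow_smul_eq_zero hg hH (hgrad x hx) (hharm x hx)

theorem stmt7 {N : ℕ} (hN : 2 ≤ N) (U : Set (EuclideanSpace ℝ (Fin N))) (hU : IsOpen U)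
    (u : EuclideanSpace ℝ (Fin N) → ℝ) (hu : ContDiffOn ℝ 2 u U)
    (hgrad : ∀ x ∈ U, gradient u x ≠ 0)
    (hharm : ∀ x ∈ U,
      ediv (fun y => ‖gradient u y‖ ^ ((N : ℝ) - 2) • gradient u y) x = 0) :
    ∀ x ∈ U,
      ediv (fun y =>
          ((N : ℝ) * ⟪y, gradient u y⟫ * ‖gradient u y‖ ^ ((N : ℝ) - 2)) • gradient u y -
            (‖gradient u y‖ ^ (N : ℝ)) • y) x = 0 :=
  stmt7_general U hU u hu hgrad hharm
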